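/- For normalized pure states |ψ₁⟩, |ψ₂⟩ in a finite-dimensional complex Hilbert space and a real number p ≥ 0, the trace norm satisfies ‖p|ψ₁⟩⟨ψ₁| − |ψ₂⟩⟨ψ₂|‖₁ = √((p+1)² − 4p|⟨ψ₁|ψ₂⟩|²). -/

import Mathlib

open Matrix ComplexOrder

/-- Trace norm ‖M‖₁ = Tr √(MᴴM). -/
noncomputable def traceNorm {n : Type*} [Fintype n] [DecidableEq n] (M : Matrix n n ℂ) : ℝ :=
  (((Matrix.posSemidef_conjTranspose_mul_self M).1.eigenvectorUnitary : Matrix n n ℂ) *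
    Matrix.diagonal (((↑) : ℝ → ℂ) ∘ (√·) ∘ (Matrix.posSemidef_conjTranspose_mul_self M).1.eigenvalues) *
    (star (Matrix.posSemidef_conjTranspose_mul_self M).1.eigenvectorUnitary : Matrix n n ℂ)).trace.re

/-- Rank-one projection |ψ⟩⟨ψ| as a matrix. -/
noncomputable def proj {n : Type*} (ψ : n → ℂ) : Matrix n n ℂ :=
  Matrix.vecMulVec ψ (star ψ)

/-!
Write `A = |ψ₁⟩⟨ψ₁|`, `B = |ψ₂⟩⟨ψ₂|` and `t = |⟨ψ₁|ψ₂⟩|²`. Then `A`, `B` are idempotent with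
`ABA = tA` and `BAB = tB`, so the Hermitian matrix `M = pA - B` satisfies
`M³ = (p - 1)M² + p(1 - t)M`. Every eigenvalue `μ` of `M` is therefore `0` or a root of
`μ² = (p - 1)μ + p(1 - t)`, and in both cases `|μ| d = 2μ² - (p - 1)μ` with
`d = √((p - 1)² + 4p(1 - t))`. Summing over the spectrum with `Tr M = p - 1` and
`Tr M² = p² + 1 - 2pt` gives `‖M‖₁ = Σ |μ| = d`; Cauchy–Schwarz (`t ≤ 1`) keeps `p(1 - t) ≥ 0`.
-/

lemma abs_mul_sqrt_eq_of_cube_eq {s q μ : ℝ} (hq : 0 ≤ q) (hμ : μ ^ 3 = s * μ ^ 2 + q * μ) :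
    |μ| * √(s ^ 2 + 4 * q) = 2 * μ ^ 2 - s * μ := by
  rcases eq_or_ne μ 0 with rfl | hμ0
  · simp
  have hquad : μ ^ 2 = s * μ + q := mul_right_cancel₀ hμ0 (by linear_combination hμ)
  have hsqrt : √(s ^ 2 + 4 * q) = |2 * μ - s| := by
    rw [← Real.sqrt_sq_eq_abs]; congr 1; linear_combination (-4) * hquad
  rw [hsqrt, ← abs_mul, abs_of_nonneg (by nlinarith)]
  ring

lemma sum_abs_eq_sqrt_of_cube_eq {ι : Type*} [Fintype ι] {f : ι → ℝ} {s q : ℝ} (hq : 0 ≤ q)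
    (hf : ∀ i, f i ^ 3 = s * f i ^ 2 + q * f i) (hsum : ∑ i, f i = s)
    (hsum_sq : ∑ i, f i ^ 2 = s ^ 2 + 2 * q) :
    ∑ i, |f i| = √(s ^ 2 + 4 * q) := by
  set d := √(s ^ 2 + 4 * q)
  have hd : (∑ i, |f i|) * d = d * d := by
    calc (∑ i, |f i|) * d = ∑ i, (2 * f i ^ 2 - s * f i) := by
          rw [Finset.sum_mul]
          exact Finset.sum_congr rfl fun i _ ↦ abs_mul_sqrt_eq_of_cube_eq hq (hf i)
      _ = 2 * ∑ i, f i ^ 2 - s * ∑ i, f i := by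
          rw [Finset.sum_sub_distrib, Finset.mul_sum, Finset.mul_sum]
      _ = d * d := by rw [hsum, hsum_sq, Real.mul_self_sqrt (by positivity)]; ring
  rcases (Real.sqrt_nonneg _).eq_or_lt with hd0 | hdpos
  · have hs : s = 0 := by nlinarith [Real.sqrt_eq_zero'.mp hd0.symm]
    have hq0 : q = 0 := by nlinarith [Real.sqrt_eq_zero'.mp hd0.symm]
    have hf0 : ∀ i, f i = 0 := fun i ↦
      pow_eq_zero_iff three_ne_zero |>.mp (by simpa [hs, hq0] using hf i)
    simpa [hf0] using hd0
  · exact mul_right_cancel₀ hdpos.ne' hd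

lemma smul_sub_pow_three_of_isIdempotentElem {R α : Type*} [CommRing R] [Ring α] [Algebra R α]
    {A B : α} (p t : R)    (hA : IsIdempotentElem A) (hB : IsIdempotentElem B) (hABA : A * B * A = t • A)
    (hBAB : B * A * B = t • B) :
    (p • A - B) ^ 3 = (p - 1) • (p • A - B) ^ 2 + (p * (1 - t)) • (p • A - B) := by
  have hA' : ∀ X, X * A * A = X * A := fun X ↦ by rw [mul_assoc, hA.eq]
  have hB' : ∀ X, X * B * B = X * B := fun X ↦ by rw [mul_assoc, hB.eq]
  simp only [pow_succ, pow_zero, one_mul, sub_mul, mul_sub, smul_mul_assoc, mul_smul_comm,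
    hA.eq, hB.eq, hA', hB', hABA, hBAB, smul_smul]
  module

namespace Matrix.IsHermitian
variable {n 𝕜 : Type*} [Fintype n] [DecidableEq n] [RCLike 𝕜] {A : Matrix n n 𝕜}

lemma trace_cfc (hA : A.IsHermitian) (f : ℝ → ℝ) :
    (cfc f A).trace = ∑ i, (f (hA.eigenvalues i) : 𝕜) := by
  rw [hA.cfc_eq, IsHermitian.cfc, Unitary.conjStarAlgAut_apply, trace_mul_cycle,
    Unitary.coe_star_mul_self, one_mul, trace_diagonal]
  rfl

lemma eval_eigenvalues_eq_zero (hA : A.IsHermitian) {q : Polynomial ℝ}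
    (hq : Polynomial.aeval A q = 0) (i : n) : q.eval (hA.eigenvalues i) = 0 := by
  have h : cfc q.eval A = cfc (0 : ℝ → ℝ) A := by rw [cfc_polynomial q A, hq, cfc_zero]
  have hspec := eqOn_of_cfc_eq_cfc h
  rw [hA.spectrum_real_eq_range_eigenvalues] at hspec
  exact hspec (Set.mem_range_self i)

end Matrix.IsHermitian

lemma traceNorm_eq_re_trace_cfc_sqrt {n : Type*} [Fintype n] [DecidableEq n] (M : Matrix n n ℂ) :
    traceNorm M = (cfc Real.sqrt (Mᴴ * M)).trace.re := by
  rw [(posSemidef_conjTranspose_mul_self M).1.cfc_eq]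
  rfl

lemma Matrix.IsHermitian.traceNorm_eq_sum_abs_eigenvalues {n : Type*} [Fintype n] [DecidableEq n]
    {M : Matrix n n ℂ} (hM : M.IsHermitian) : traceNorm M = ∑ i, |hM.eigenvalues i| := by
  have hsq : Mᴴ * M = cfc (· ^ 2 : ℝ → ℝ) M := by
    rw [hM.eq, ← sq]; exact (cfc_pow_id (R := ℝ) M 2 hM).symm
  rw [traceNorm_eq_re_trace_cfc_sqrt, hsq, ← cfc_comp' Real.sqrt _ M, hM.trace_cfc]
  simp [Real.sqrt_sq_eq_abs]

section proj
variable {n : Type*} [Fintype n] (ψ φ : n → ℂ)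

lemma isHermitian_proj : (proj ψ).IsHermitian := (posSemidef_vecMulVec_self_star ψ).isHermitian

lemma proj_mul_proj : proj ψ * proj φ = (star ψ ⬝ᵥ φ) • vecMulVec ψ (star φ) := by
  rw [proj, proj, vecMulVec_mul_vecMulVec, vecMulVec_smul]

lemma proj_mul_proj_mul_proj : proj ψ * proj φ * proj ψ = (‖star ψ ⬝ᵥ φ‖ ^ 2 : ℝ) • proj ψ := by
  rw [proj_mul_proj, smul_mul_assoc, proj, vecMulVec_mul_vecMulVec, vecMulVec_smul, smul_smul,
    star_dotProduct φ, ← Complex.coe_smul, Complex.ofReal_pow, ← Complex.mul_conj']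
  rfl

lemma trace_proj_mul_proj : (proj ψ * proj φ).trace = (‖star ψ ⬝ᵥ φ‖ ^ 2 : ℝ) := by
  rw [proj_mul_proj, trace_smul, trace_vecMulVec, dotProduct_comm ψ, star_dotProduct φ,
    Complex.ofReal_pow, ← Complex.mul_conj']
  rfl

lemma star_dotProduct_self_eq_sum_norm_sq : star ψ ⬝ᵥ ψ = ((∑ i, ‖ψ i‖ ^ 2 : ℝ) : ℂ) := by
  rw [← EuclideanSpace.norm_sq_eq (WithLp.toLp 2 ψ), Complex.ofReal_pow, dotProduct_comm,
    ← EuclideanSpace.inner_toLp_toLp]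
  exact inner_self_eq_norm_sq_to_K _

lemma trace_proj : (proj ψ).trace = ((∑ i, ‖ψ i‖ ^ 2 : ℝ) : ℂ) := by
  rw [proj, trace_vecMulVec, dotProduct_comm, star_dotProduct_self_eq_sum_norm_sq]

lemma isIdempotentElem_proj (hψ : ∑ i, ‖ψ i‖ ^ 2 = 1) : IsIdempotentElem (proj ψ) := by
  rw [IsIdempotentElem, proj_mul_proj, star_dotProduct_self_eq_sum_norm_sq, hψ,
    Complex.ofReal_one, one_smul, proj]

lemma trace_sq_smul_proj_sub_proj [DecidableEq n] (hψ : ∑ i, ‖ψ i‖ ^ 2 = 1) (hφ : ∑ i, ‖φ i‖ ^ 2 = 1) (p : ℝ) :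
    ((p • proj ψ - proj φ) ^ 2).trace = ((p ^ 2 + 1 - 2 * p * ‖star ψ ⬝ᵥ φ‖ ^ 2 : ℝ) : ℂ) := by
  rw [sq]
  simp only [sub_mul, mul_sub, smul_mul_assoc, mul_smul_comm, (isIdempotentElem_proj ψ hψ).eq,
    (isIdempotentElem_proj φ hφ).eq, trace_sub, trace_smul, trace_proj, hψ, hφ, Complex.real_smul]
  rw [trace_mul_comm (proj φ), trace_proj_mul_proj]
  push_cast
  ring

lemma norm_star_dotProduct_sq_le :
    ‖star ψ ⬝ᵥ φ‖ ^ 2 ≤ (∑ i, ‖ψ i‖ ^ 2) * ∑ i, ‖φ i‖ ^ 2 := by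
  rw [← EuclideanSpace.norm_sq_eq (WithLp.toLp 2 ψ),
    ← EuclideanSpace.norm_sq_eq (WithLp.toLp 2 φ), ← mul_pow, dotProduct_comm, ← EuclideanSpace.inner_toLp_toLp]
  exact pow_le_pow_left₀ (norm_nonneg _) (norm_inner_le_norm _ _) 2

end proj

lemma Matrix.IsHermitian.traceNorm_eq_sqrt_of_cube_eq {n : Type*} [Fintype n] [DecidableEq n]
    {M : Matrix n n ℂ} (hM : M.IsHermitian) {s q : ℝ} (hq : 0 ≤ q)
    (hcube : M ^ 3 = s • M ^ 2 + q • M) (htr : M.trace = s)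
    (htr_sq : (M ^ 2).trace = (s ^ 2 + 2 * q : ℝ)) :
    traceNorm M = √(s ^ 2 + 4 * q) := by
  rw [hM.traceNorm_eq_sum_abs_eigenvalues]
  refine sum_abs_eq_sqrt_of_cube_eq hq (fun i ↦ ?_) ?_ ?_
  · have h := hM.eval_eigenvalues_eq_zero
      (q := .X ^ 3 - .C s * .X ^ 2 - .C q * .X) (by simp [hcube, Algebra.smul_def]) i
    simp only [Polynomial.eval_sub, Polynomial.eval_mul, Polynomial.eval_pow, Polynomial.eval_C,
      Polynomial.eval_X] at h
    linarith
  · have h := hM.trace_eq_sum_eigenvalues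
    rw [htr] at h
    exact Complex.ofReal_injective (by simpa using h.symm)
  · have h := hM.trace_cfc (· ^ 2)
    rw [show cfc (· ^ 2 : ℝ → ℝ) M = M ^ 2 from cfc_pow_id M 2 hM, htr_sq] at h
    exact Complex.ofReal_injective (by simpa using h.symm)

/-- For normalized pure states and p ≥ 0,
‖p|ψ₁⟩⟨ψ₁| − |ψ₂⟩⟨ψ₂|‖₁ = √((p+1)² − 4p|⟨ψ₁|ψ₂⟩|²). -/
theorem stmt0 {n : Type*} [Fintype n] [DecidableEq n] (ψ₁ ψ₂ : n → ℂ)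
    (h₁ : ∑ i, ‖ψ₁ i‖ ^ 2 = 1) (h₂ : ∑ i, ‖ψ₂ i‖ ^ 2 = 1) (p : ℝ) (hp : 0 ≤ p) :
    traceNorm ((p : ℂ) • proj ψ₁ - proj ψ₂) =
      Real.sqrt ((p + 1) ^ 2 - 4 * p * ‖∑ i, star (ψ₁ i) * ψ₂ i‖ ^ 2) := by
  change _ = √((p + 1) ^ 2 - 4 * p * ‖star ψ₁ ⬝ᵥ ψ₂‖ ^ 2)
  set t := ‖star ψ₁ ⬝ᵥ ψ₂‖ ^ 2 with ht_def
  have ht : t ≤ 1 := by simpa only [h₁, h₂, one_mul] using norm_star_dotProduct_sq_le ψ₁ ψ₂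
  have hBAB : proj ψ₂ * proj ψ₁ * proj ψ₂ = t • proj ψ₂ := by
    rw [proj_mul_proj_mul_proj, star_dotProduct (v := ψ₂), norm_star]
  have hM : (p • proj ψ₁ - proj ψ₂).IsHermitian :=
    ((isHermitian_proj ψ₁).smul (IsSelfAdjoint.all p)).sub (isHermitian_proj ψ₂)
  rw [Complex.coe_smul, hM.traceNorm_eq_sqrt_of_cube_eq (s := p - 1) (q := p * (1 - t))
    (mul_nonneg hp (sub_nonneg.mpr ht))
    (smul_sub_pow_three_of_isIdempotentElem p t (isIdempotentElem_proj ψ₁ h₁)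
      (isIdempotentElem_proj ψ₂ h₂) (proj_mul_proj_mul_proj ψ₁ ψ₂) hBAB)]
  · congr 1; ring
  · simp [trace_proj, h₁, h₂]
  · rw [trace_sq_smul_proj_sub_proj ψ₁ ψ₂ h₁ h₂, ← ht_def]
    congr 1; ring
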